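/- arXiv:1104.3769 — 2 statements merged into one kernel-verified Lean document; each statement's English description precedes it below -/
import Mathlib

section
/- Let u ≥ 0 be a real number with 2u < 1, and set γ₂ := 2u/(1−2u). Let α, β, h, c₂_prev, c₁_prev, ĉ₂_prev, ĉ₁_prev, ĉ be real numbers, with errors e₂_prev := ĉ₂_prev − c₂_prev and e₁_prev := ĉ₁_prev − c₁_prev. Suppose the exact recursion c = c₂_prev − α·c₁_prev − h·β holds, and the computed value satisfies (1+ε)·ĉ = ĉ₂_prev·(1+δ) − α·ĉ₁_prev·(1+θ₂) − h·β·(1+η) for some real δ, η, ε, θ₂ with |δ| ≤ u, |η| ≤ u, |ε| ≤ u, |θ₂| ≤ γ₂. Then the error e := ĉ − c satisfies |e| ≤ |e₂_prev| + |α·e₁_prev| + u·(|ĉ₂_prev| + |h·β| + |ĉ|) + γ₂·|α·ĉ₁_prev|. -/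
/-
Subtracting the exact recursion from the perturbed one writes the error `ĉ - c` as the propagated
errors `e₂ - α e₁` plus four first-order terms `δ ĉ₂`, `η h β`, `ε ĉ` and `θ₂ α ĉ₁`, each a relative
perturbation times a computed quantity; the triangle inequality then gives the bound.
-/

section

variable {R : Type*} [CommRing R] [LinearOrder R] [IsStrictOrderedRing R]

theorem abs_mul_le_mul_abs_of_abs_le {δ u : R} (hδ : |δ| ≤ u) (x : R) :
    |δ * x| ≤ u * |x| := by
  rw [abs_mul]
  exact mul_le_mul_of_nonneg_right hδ (abs_nonneg x)

theorem abs_sub_add_sub_sub_sub_le (y₁ y₂ y₃ y₄ y₅ y₆ : R) :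
    |y₁ - y₂ + y₃ - y₄ - y₅ - y₆| ≤ |y₁| + |y₂| + |y₃| + |y₄| + |y₅| + |y₆| := by
  refine abs_le.mpr ⟨?_, ?_⟩ <;>
    linarith [neg_abs_le y₁, le_abs_self y₁, neg_abs_le y₂, le_abs_self y₂,
      neg_abs_le y₃, le_abs_self y₃, neg_abs_le y₄, le_abs_self y₄,
      neg_abs_le y₅, le_abs_self y₅, neg_abs_le y₆, le_abs_self y₆]

end

theorem stmt_8_general (u : ℝ)
    (α β h c₂prev c₁prev c₂hatprev c₁hatprev chat c δ η ε θ₂ : ℝ)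
    (hδ : |δ| ≤ u) (hη : |η| ≤ u) (hε : |ε| ≤ u)
    (hθ : |θ₂| ≤ 2 * u / (1 - 2 * u))
    (hexact : c = c₂prev - α * c₁prev - h * β)
    (hcomp : (1 + ε) * chat =
      c₂hatprev * (1 + δ) - α * c₁hatprev * (1 + θ₂) - h * β * (1 + η)) :
    |chat - c| ≤ |c₂hatprev - c₂prev| + |α * (c₁hatprev - c₁prev)|
      + u * (|c₂hatprev| + |h * β| + |chat|)
      + (2 * u / (1 - 2 * u)) * |α * c₁hatprev| := by
  have herror : chat - c = (c₂hatprev - c₂prev) - α * (c₁hatprev - c₁prev)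
      + δ * c₂hatprev - η * (h * β) - ε * chat - θ₂ * (α * c₁hatprev) := by
    linear_combination hcomp - hexact
  rw [herror]
  refine (abs_sub_add_sub_sub_sub_le _ _ _ _ _ _).trans ?_
  linarith [abs_mul_le_mul_abs_of_abs_le hδ c₂hatprev, abs_mul_le_mul_abs_of_abs_le hη (h * β),
    abs_mul_le_mul_abs_of_abs_le hε chat, abs_mul_le_mul_abs_of_abs_le hθ (α * c₁hatprev)]

/-- Theorem 5.2 (inductive case) of the paper: error bound for
`ĉ₂⁽ⁱ⁾ = fl[fl[ĉ₂⁽ⁱ⁻¹⁾ − fl[αᵢ ĉ₁⁽ⁱ⁻¹⁾]] − fl[h_{i−1,i} βᵢ]]`, `i ≥ 3`. -/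
theorem stmt_8 (u : ℝ) (hu : 0 ≤ u) (h2u : 2 * u < 1)
    (α β h c₂prev c₁prev c₂hatprev c₁hatprev chat c δ η ε θ₂ : ℝ)
    (hδ : |δ| ≤ u) (hη : |η| ≤ u) (hε : |ε| ≤ u)
    (hθ : |θ₂| ≤ 2 * u / (1 - 2 * u))
    (hexact : c = c₂prev - α * c₁prev - h * β)
    (hcomp : (1 + ε) * chat =
      c₂hatprev * (1 + δ) - α * c₁hatprev * (1 + θ₂) - h * β * (1 + η)) :
    |chat - c| ≤ |c₂hatprev - c₂prev| + |α * (c₁hatprev - c₁prev)|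
      + u * (|c₂hatprev| + |h * β| + |chat|)
      + (2 * u / (1 - 2 * u)) * |α * c₁hatprev| :=
  stmt_8_general u α β h c₂prev c₁prev c₂hatprev c₁hatprev chat c δ η ε θ₂ hδ hη hε hθ hexact hcomp
end

section
/- Let u ≥ 0 be a real number, let j ≥ 3 be an integer with (j+1)·u < 1, and set γₘ := m·u/(1−m·u). Let α, and real numbers c_a, ĉ_a (previous coefficient of same index), c_b, ĉ_b (previous coefficient of index one less), for m = 1,…,j−2 real numbers tₘ with exact coefficients dₘ and computed coefficients d̂ₘ, and a real number w be given; define e_a := ĉ_a − c_a, e_b := ĉ_b − c_b, eₘ := d̂ₘ − dₘ. Suppose the exact value is c = c_a − α·c_b − Σ_{m=1}^{j−2} tₘ·dₘ − w, and the computed value ĉ satisfies (1+ε)·ĉ = ĉ_a·(1+δ) − α·ĉ_b·(1+θ₂) − t₁·d̂₁·(1+θⱼ) − Σ_{m=2}^{j−2} tₘ·d̂ₘ·(1+θ_{j+1}⁽ᵐ⁾) − w·(1+θ̂ⱼ), where |δ| ≤ u, |ε| ≤ u, |θ₂| ≤ γ₂, |θⱼ| ≤ γⱼ, |θ̂ⱼ|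 ≤ γⱼ, and |θ_{j+1}⁽ᵐ⁾| ≤ γ_{j+1} for each m. Then the error e := ĉ − c satisfies |e| ≤ |e_a| + |α·e_b| + Σ_{m=1}^{j−2} |tₘ·eₘ| + γ_{j+1}·Σ_{m=2}^{j−2} |tₘ·d̂ₘ| + γⱼ·(|t₁·d̂₁| + |w|) + u·(|ĉ| + |ĉ_a|) + γ₂·|α·ĉ_b|. -/
/-!
Subtracting the exact recurrence from the perturbed one writes `ĉ - c` as the propagated errors
`e_a - α e_b - Σ tₘ eₘ` plus one first-order term `θ · (computed quantity)` for each rounding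
perturbation; the triangle inequality and `|θ x| ≤ γ |x|` bound each term separately.
-/

open Finset

section

variable {α ι : Type*} [Ring α] [LinearOrder α] [IsOrderedRing α]

theorem abs_mul_le_of_abs_le {θ g : α} (h : |θ| ≤ g) (x : α) : |θ * x| ≤ g * |x| := by
  rw [abs_mul]
  exact mul_le_mul_of_nonneg_right h (abs_nonneg x)

theorem abs_sum_mul_le_of_abs_le {s : Finset ι} {θ : ι → α} {g : α}
    (h : ∀ i ∈ s, |θ i| ≤ g) (x : ι → α) : |∑ i ∈ s, θ i * x i| ≤ g * ∑ i ∈ s, |x i| := by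
  rw [mul_sum]
  exact (abs_sum_le_sum_abs _ _).trans (sum_le_sum fun i hi => abs_mul_le_of_abs_le (h i hi) _)

end

theorem stmt_10_general (u : ℝ) (j : ℕ) (hj : 3 ≤ j)
    (α ca cahat cb cbhat w chat c δ ε θ₂ θj θj' : ℝ)
    (t d dhat θ' : ℕ → ℝ)
    (hδ : |δ| ≤ u) (hε : |ε| ≤ u)
    (hθ₂ : |θ₂| ≤ 2 * u / (1 - 2 * u))
    (hθj : |θj| ≤ (j : ℝ) * u / (1 - (j : ℝ) * u))
    (hθj' : |θj'| ≤ (j : ℝ) * u / (1 - (j : ℝ) * u))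
    (hθ' : ∀ m ∈ Finset.Icc 2 (j - 2),
      |θ' m| ≤ ((j : ℝ) + 1) * u / (1 - ((j : ℝ) + 1) * u))
    (hexact : c = ca - α * cb - (∑ m ∈ Finset.Icc 1 (j - 2), t m * d m) - w)
    (hcomp : (1 + ε) * chat = cahat * (1 + δ) - α * cbhat * (1 + θ₂)
      - t 1 * dhat 1 * (1 + θj)
      - (∑ m ∈ Finset.Icc 2 (j - 2), t m * dhat m * (1 + θ' m)) - w * (1 + θj')) :
    |chat - c| ≤ |cahat - ca| + |α * (cbhat - cb)|
      + (∑ m ∈ Finset.Icc 1 (j - 2), |t m * (dhat m - d m)|)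
      + (((j : ℝ) + 1) * u / (1 - ((j : ℝ) + 1) * u))
          * (∑ m ∈ Finset.Icc 2 (j - 2), |t m * dhat m|)
      + ((j : ℝ) * u / (1 - (j : ℝ) * u)) * (|t 1 * dhat 1| + |w|)
      + u * (|chat| + |cahat|)
      + (2 * u / (1 - 2 * u)) * |α * cbhat| := by
  have hsplit : ∑ m ∈ Icc 1 (j - 2), t m * dhat m
      = t 1 * dhat 1 + ∑ m ∈ Icc 2 (j - 2), t m * dhat m := by
    rw [← add_sum_Ioc_eq_sum_Icc (by omega), ← Icc_add_one_left_eq_Ioc]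
    rfl
  have hθ'sum : ∑ m ∈ Icc 2 (j - 2), t m * dhat m * (1 + θ' m)
      = ∑ m ∈ Icc 2 (j - 2), t m * dhat m + ∑ m ∈ Icc 2 (j - 2), θ' m * (t m * dhat m) := by
    rw [← sum_add_distrib]
    exact sum_congr rfl fun m _ => by ring
  have herr : chat - c = (cahat - ca) - α * (cbhat - cb)
      - ∑ m ∈ Icc 1 (j - 2), t m * (dhat m - d m) - ∑ m ∈ Icc 2 (j - 2), θ' m * (t m * dhat m)
      - θj * (t 1 * dhat 1) - θj' * w - ε * chat + δ * cahat - θ₂ * (α * cbhat) := by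
    simp only [mul_sub, sum_sub_distrib]
    linear_combination hcomp - hexact - hθ'sum + hsplit
  have htriangle : |chat - c| ≤ |cahat - ca| + |α * (cbhat - cb)|
      + |∑ m ∈ Icc 1 (j - 2), t m * (dhat m - d m)| + |∑ m ∈ Icc 2 (j - 2), θ' m * (t m * dhat m)|
      + |θj * (t 1 * dhat 1)| + |θj' * w| + |ε * chat| + |δ * cahat| + |θ₂ * (α * cbhat)| := by
    rw [herr]
    repeat first
      | refine (abs_sub _ _).trans (add_le_add_left ?_ _)
      | refine (abs_add_le _ _).trans (add_le_add_left ?_ _)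
    exact le_rfl
  refine htriangle.trans ?_
  linarith [abs_sum_le_sum_abs (fun m => t m * (dhat m - d m)) (Icc 1 (j - 2)),
    abs_sum_mul_le_of_abs_le hθ' (fun m => t m * dhat m), abs_mul_le_of_abs_le hθj (t 1 * dhat 1),
    abs_mul_le_of_abs_le hθj' w, abs_mul_le_of_abs_le hε chat, abs_mul_le_of_abs_le hδ cahat,
    abs_mul_le_of_abs_le hθ₂ (α * cbhat)]

/-- Theorem 5.3 (case 3 ≤ j < i) of the paper: error bound for
`ĉⱼ⁽ⁱ⁾ = fl[fl[ĉⱼ⁽ⁱ⁻¹⁾ − fl[αᵢ ĉⱼ₋₁⁽ⁱ⁻¹⁾]] − fl[Σₘ tₘ ĉ_{j−m−1}⁽ⁱ⁻ᵐ⁻¹⁾ + w]]`,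
where `tₘ = h_{i−m,i} βᵢ⋯β_{i−m+1}` and `w = h_{i−j+1,i} βᵢ⋯β_{i−j+2}`. -/
theorem stmt_10 (u : ℝ) (hu : 0 ≤ u) (j : ℕ) (hj : 3 ≤ j)
    (hju : ((j : ℝ) + 1) * u < 1)
    (α ca cahat cb cbhat w chat c δ ε θ₂ θj θj' : ℝ)
    (t d dhat θ' : ℕ → ℝ)
    (hδ : |δ| ≤ u) (hε : |ε| ≤ u)
    (hθ₂ : |θ₂| ≤ 2 * u / (1 - 2 * u))
    (hθj : |θj| ≤ (j : ℝ) * u / (1 - (j : ℝ) * u))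
    (hθj' : |θj'| ≤ (j : ℝ) * u / (1 - (j : ℝ) * u))
    (hθ' : ∀ m ∈ Finset.Icc 2 (j - 2),
      |θ' m| ≤ ((j : ℝ) + 1) * u / (1 - ((j : ℝ) + 1) * u))
    (hexact : c = ca - α * cb - (∑ m ∈ Finset.Icc 1 (j - 2), t m * d m) - w)
    (hcomp : (1 + ε) * chat = cahat * (1 + δ) - α * cbhat * (1 + θ₂)
      - t 1 * dhat 1 * (1 + θj)
      - (∑ m ∈ Finset.Icc 2 (j - 2), t m * dhat m * (1 + θ' m)) - w * (1 + θj')) :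
    |chat - c| ≤ |cahat - ca| + |α * (cbhat - cb)|
      + (∑ m ∈ Finset.Icc 1 (j - 2), |t m * (dhat m - d m)|)
      + (((j : ℝ) + 1) * u / (1 - ((j : ℝ) + 1) * u))
          * (∑ m ∈ Finset.Icc 2 (j - 2), |t m * dhat m|)
      + ((j : ℝ) * u / (1 - (j : ℝ) * u)) * (|t 1 * dhat 1| + |w|)
      + u * (|chat| + |cahat|)
      + (2 * u / (1 - 2 * u)) * |α * cbhat| :=
  stmt_10_general u j hj α ca cahat cb cbhat w chat c δ ε θ₂ θj θj' t d dhat θ' hδ hε hθ₂ hθj hθj'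
    hθ' hexact hcomp
end
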